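/- Let F : ℝ^n → ℝ be a convex function with F ≥ 0, let A be a real m×n matrix, S a real m×m matrix, d ∈ ℝ^m, and N a positive integer. Let f^0 ∈ ℝ^n, p^0 = 0, and for m = 1,…,N let f^m be a global minimizer over ℝ^n of f ↦ F(f) − F(f^{m-1}) − ⟨p^{m-1}, f − f^{m-1}⟩ + (1/2)‖S(d − Af)‖₂², and set p^m = p^{m-1} − AᵀSᵀS(Af^m − d). Then for every f* ∈ ℝ^n, F(f*) − F(f^N) − ⟨p^N, f* − f^N⟩ + (1/2)Σ_{m=1}^{N}‖S(Af^m − d)‖₂² ≤ F(f*) + (N/2)‖S(Af* − d)‖₂². -/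

import Mathlib

open Matrix Finset

/-!
Minimality of `f^k`, tested along the segment from `f^k` towards an arbitrary point and
differentiated at `f^k`, makes `p^k` a subgradient of the convex `F` at `f^k`. The update rule for
`p^k` gives `D^{p^k}(f*, f^k) + ½‖S(Af^k − d)‖² ≤ D^{p^{k-1}}(f*, f^k) + ½‖S(Af* − d)‖²`, the
difference being `½‖SA(f* − f^k)‖²`. By the three-point identity and `D^{p^{k-1}}(f^k, f^{k-1}) ≥ 0`,
`D^{p^{k-1}}(f*, f^k) ≤ D^{p^{k-1}}(f*, f^{k-1})`, so these estimates telescope; the first one is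
bounded by `F(f*) + ½‖S(Af* − d)‖²` since `p^0 = 0` and `F ≥ 0`.
-/

/-- Squared Euclidean norm of a vector. -/
noncomputable def enormSq {m : ℕ} (x : Fin m → ℝ) : ℝ := ∑ i, (x i) ^ 2

theorem ConvexOn.sub_le_of_isMinOn_add {E : Type*} [AddCommGroup E] [Module ℝ E]
    {F g : E → ℝ} {x u : E} {L : ℝ} (hF : ConvexOn ℝ Set.univ F)
    (hmin : IsMinOn (F + g) Set.univ x)
    (hg : HasDerivAt (fun t : ℝ => g (x + t • (u - x))) L 0) :
    F x - L ≤ F u := by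
  have hslope_ge : ∀ t ∈ Set.Ioo (0 : ℝ) 1,
      F x - F u ≤ t⁻¹ • (g (x + (0 + t) • (u - x)) - g (x + (0 : ℝ) • (u - x))) := by
    rintro t ⟨ht0, ht1⟩
    have hconv : F (x + t • (u - x)) ≤ (1 - t) * F x + t * F u := by
      have := hF.2 (Set.mem_univ x) (Set.mem_univ u) (sub_nonneg.2 ht1.le) ht0.le (by ring)
      rw [smul_eq_mul, smul_eq_mul] at this
      rwa [show x + t • (u - x) = (1 - t) • x + t • u by module]
    have hle := isMinOn_univ_iff.1 hmin (x + t • (u - x))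
    simp only [Pi.add_apply] at hle
    rw [zero_add, zero_smul, add_zero, smul_eq_mul, le_inv_mul_iff₀ ht0]
    linarith
  exact sub_le_comm.1 (ge_of_tendsto hg.tendsto_slope_zero_right
    (Filter.mem_of_superset (Ioo_mem_nhdsGT one_pos) hslope_ge))

theorem enormSq_eq_dotProduct {m : ℕ} (x : Fin m → ℝ) : enormSq x = x ⬝ᵥ x := by
  simp only [enormSq, dotProduct, sq]

theorem enormSq_nonneg {m : ℕ} (x : Fin m → ℝ) : 0 ≤ enormSq x :=
  Finset.sum_nonneg fun i _ => sq_nonneg (x i)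

theorem hasDerivAt_enormSq_add_smul {m : ℕ} (r v : Fin m → ℝ) :
    HasDerivAt (fun t : ℝ => enormSq (r + t • v)) (2 * (r ⬝ᵥ v)) 0 := by
  have hterm : ∀ i ∈ (univ : Finset (Fin m)),
      HasDerivAt (fun t : ℝ => (r i + t * v i) ^ 2) (2 * (r i * v i)) 0 := by
    intro i _
    exact ((((hasDerivAt_id (0 : ℝ)).mul_const (v i)).const_add (r i)).fun_pow 2).congr_deriv
      (by simp only [Nat.cast_ofNat, id_eq, zero_mul, add_zero, Nat.add_one_sub_one, pow_one,
        one_mul]; ring)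
  simpa only [enormSq, dotProduct, Finset.mul_sum, Pi.add_apply, Pi.smul_apply, smul_eq_mul]
    using HasDerivAt.fun_sum hterm

theorem transpose_mul_transpose_mul_mulVec_dotProduct {R ι κ μ : Type*} [CommSemiring R]
    [Fintype ι] [Fintype κ] [Fintype μ] (A : Matrix κ ι R) (S : Matrix μ κ R) (z : κ → R)
    (w : ι → R) : ((Aᵀ * Sᵀ * S) *ᵥ z) ⬝ᵥ w = (S *ᵥ z) ⬝ᵥ (S *ᵥ (A *ᵥ w)) := by
  rw [← mulVec_mulVec, ← mulVec_mulVec, mulVec_transpose, mulVec_transpose,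
    ← dotProduct_mulVec, ← dotProduct_mulVec]

theorem hasDerivAt_half_enormSq_mulVec_sub {ι κ : Type*} [Fintype ι] [Fintype κ] {l : ℕ}
    (A : Matrix κ ι ℝ) (S : Matrix (Fin l) κ ℝ) (d : κ → ℝ) (x w : ι → ℝ) :
    HasDerivAt (fun t : ℝ => (1 / 2) * enormSq (S *ᵥ (d - A *ᵥ (x + t • w))))
      (((Aᵀ * Sᵀ * S) *ᵥ (A *ᵥ x - d)) ⬝ᵥ w) 0 := by
  have hline : ∀ t : ℝ,
      S *ᵥ (d - A *ᵥ (x + t • w)) = S *ᵥ (d - A *ᵥ x) + t • -(S *ᵥ (A *ᵥ w)) := by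
    intro t
    simp only [mulVec_add, mulVec_smul, mulVec_sub, smul_neg]
    abel
  simp only [hline]
  refine ((hasDerivAt_enormSq_add_smul _ _).const_mul (1 / 2)).congr_deriv ?_
  rw [transpose_mul_transpose_mul_mulVec_dotProduct, dotProduct_neg, ← neg_dotProduct,
    ← mulVec_neg, neg_sub]
  ring

/-- The Bregman distance `D_F^p(u, v)`, where `p` plays the role of a subgradient of `F` at `v`. -/
def bregmanDist {ι : Type*} [Fintype ι] (F : (ι → ℝ) → ℝ) (p u v : ι → ℝ) : ℝ :=
  F u - F v - p ⬝ᵥ (u - v)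

theorem bregmanDist_eq_sub {ι : Type*} [Fintype ι] (F : (ι → ℝ) → ℝ) (p u v w : ι → ℝ) :
    bregmanDist F p u w = bregmanDist F p u v - bregmanDist F p w v := by
  simp only [bregmanDist, dotProduct_sub]
  ring

theorem bregmanDist_nonneg_of_isMinOn {ι κ : Type*} [Fintype ι] [Fintype κ] {l : ℕ}
    {F : (ι → ℝ) → ℝ} (hF : ConvexOn ℝ Set.univ F) (A : Matrix κ ι ℝ) (S : Matrix (Fin l) κ ℝ)
    (d : κ → ℝ) {p v x : ι → ℝ}
    (hmin : ∀ u, bregmanDist F p x v + (1 / 2) * enormSq (S *ᵥ (d - A *ᵥ x))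
      ≤ bregmanDist F p u v + (1 / 2) * enormSq (S *ᵥ (d - A *ᵥ u))) (u : ι → ℝ) :
    0 ≤ bregmanDist F (p - (Aᵀ * Sᵀ * S) *ᵥ (A *ᵥ x - d)) u x := by
  set g : (ι → ℝ) → ℝ := fun y => -(p ⬝ᵥ y) + (1 / 2) * enormSq (S *ᵥ (d - A *ᵥ y))
  have hFg : IsMinOn (F + g) Set.univ x := isMinOn_univ_iff.2 fun y => by
    have := hmin y
    simp only [bregmanDist, dotProduct_sub] at this
    simp only [g, Pi.add_apply]
    linarith
  have hlin : HasDerivAt (fun t : ℝ => -(p ⬝ᵥ (x + t • (u - x)))) (-(p ⬝ᵥ (u - x))) 0 := by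
    simpa only [dotProduct_add, dotProduct_smul, smul_eq_mul]
      using ((hasDerivAt_mul_const (p ⬝ᵥ (u - x))).const_add (p ⬝ᵥ x)).fun_neg
  have := hF.sub_le_of_isMinOn_add hFg (hlin.add (hasDerivAt_half_enormSq_mulVec_sub A S d x _))
  simp only [bregmanDist, sub_dotProduct]
  linarith

theorem bregmanDist_sub_mulVec_add_le {ι κ : Type*} [Fintype ι] [Fintype κ] {l : ℕ}
    (F : (ι → ℝ) → ℝ) (A : Matrix κ ι ℝ) (S : Matrix (Fin l) κ ℝ) (d : κ → ℝ)
    (p u v : ι → ℝ) :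
    bregmanDist F (p - (Aᵀ * Sᵀ * S) *ᵥ (A *ᵥ v - d)) u v + (1 / 2) * enormSq (S *ᵥ (A *ᵥ v - d))
      ≤ bregmanDist F p u v + (1 / 2) * enormSq (S *ᵥ (A *ᵥ u - d)) := by
  set a := S *ᵥ (A *ᵥ v - d)
  set b := S *ᵥ (A *ᵥ u - d)
  have hab : (Aᵀ * Sᵀ * S) *ᵥ (A *ᵥ v - d) ⬝ᵥ (u - v) = a ⬝ᵥ (b - a) := by
    rw [transpose_mul_transpose_mul_mulVec_dotProduct]
    congr 1
    simp only [a, b, mulVec_sub]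
    abel
  -- `‖a‖² / 2 + ⟨a, b - a⟩ = ‖b‖² / 2 - ‖b - a‖² / 2`
  have hsq := enormSq_nonneg (b - a)
  rw [bregmanDist, bregmanDist, sub_dotProduct p, hab]
  simp only [enormSq_eq_dotProduct, dotProduct_sub, sub_dotProduct, dotProduct_comm b a] at hsq ⊢
  linarith

theorem add_sum_Icc_le_of_succ_le {a c : ℕ → ℝ} {b r : ℝ} {N : ℕ} (hN : 1 ≤ N)
    (h1 : a 1 + c 1 ≤ b + r) (hsucc : ∀ k, 1 ≤ k → k < N → a (k + 1) + c (k + 1) ≤ a k + r) :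
    a N + ∑ k ∈ Icc 1 N, c k ≤ b + N * r := by
  induction N, hN using Nat.le_induction with
  | base => simpa using h1
  | succ N hN ih =>
    have hN' := ih fun k hk1 hk => hsucc k hk1 (by omega)
    have hlast := hsucc N hN (by omega)
    rw [sum_Icc_succ_top (by omega), Nat.cast_succ]
    linarith

/-- telescoped estimate for the Bregman iterative algorithm with zero initial
subgradient: for convex `F ≥ 0` and any `f*`,
`F(f*) − F(f^N) − ⟨p^N, f* − f^N⟩ + (1/2)Σ_{m=1}^{N}‖S(Af^m − d)‖₂²
  ≤ F(f*) + (N/2)‖S(Af* − d)‖₂²`. -/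
theorem stmt12 (m n : ℕ) (F : (Fin n → ℝ) → ℝ) (hF : ConvexOn ℝ Set.univ F)
    (hFpos : ∀ f, 0 ≤ F f)
    (A : Matrix (Fin m) (Fin n) ℝ) (S : Matrix (Fin m) (Fin m) ℝ) (d : Fin m → ℝ)
    (N : ℕ) (hN : 1 ≤ N) (f p : ℕ → (Fin n → ℝ)) (hp0 : p 0 = 0)
    (hmin : ∀ k : ℕ, 1 ≤ k → k ≤ N → ∀ u : Fin n → ℝ,
      F (f k) - F (f (k - 1)) - dotProduct (p (k - 1)) (f k - f (k - 1))
          + (1 / 2) * enormSq (S.mulVec (d - A.mulVec (f k)))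
        ≤ F u - F (f (k - 1)) - dotProduct (p (k - 1)) (u - f (k - 1))
          + (1 / 2) * enormSq (S.mulVec (d - A.mulVec u)))
    (hp : ∀ k : ℕ, 1 ≤ k → k ≤ N →
      p k = p (k - 1) - (Aᵀ * Sᵀ * S).mulVec (A.mulVec (f k) - d)) :
    ∀ fstar : Fin n → ℝ,
      F fstar - F (f N) - dotProduct (p N) (fstar - f N)
          + (1 / 2) * ∑ k ∈ Finset.Icc 1 N, enormSq (S.mulVec (A.mulVec (f k) - d))
        ≤ F fstar + ((N : ℝ) / 2) * enormSq (S.mulVec (A.mulVec fstar - d)) := by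
  intro fstar
  have hsub : ∀ k, 1 ≤ k → k ≤ N → ∀ u, 0 ≤ bregmanDist F (p k) u (f k) := fun k hk1 hkN u => by
    rw [hp k hk1 hkN]
    exact bregmanDist_nonneg_of_isMinOn hF A S d (hmin k hk1 hkN) u
  have hstep : ∀ k, 1 ≤ k → k ≤ N →
      bregmanDist F (p k) fstar (f k) + (1 / 2) * enormSq (S *ᵥ (A *ᵥ f k - d))
        ≤ bregmanDist F (p (k - 1)) fstar (f k) + (1 / 2) * enormSq (S *ᵥ (A *ᵥ fstar - d)) :=
    fun k hk1 hkN => hp k hk1 hkN ▸ bregmanDist_sub_mulVec_add_le F A S d _ _ _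
  have htele := add_sum_Icc_le_of_succ_le (a := fun k => bregmanDist F (p k) fstar (f k))
    (c := fun k => (1 / 2) * enormSq (S *ᵥ (A *ᵥ f k - d))) (b := F fstar)
    (r := (1 / 2) * enormSq (S *ᵥ (A *ᵥ fstar - d))) hN ?_ ?_
  · rw [mul_sum]
    simp only [bregmanDist] at htele
    linarith
  · have := hstep 1 le_rfl hN
    simp only [bregmanDist, Nat.sub_self, hp0, zero_dotProduct] at this ⊢
    linarith [hFpos (f 1)]
  · intro k hk1 hkN
    have := hstep (k + 1) (by omega) hkN
    rw [Nat.add_sub_cancel, bregmanDist_eq_sub F (p k) fstar (f k)] at this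
    linarith [hsub k hk1 hkN.le (f (k + 1))]
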